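/- Along solutions of the Wasserstein-gradient-flow continuity equation ∂_t μ + div( P^⊥_x (∫ e^{β⟨x,x'⟩} x' dμ(t,x')) μ ) = 0 on S^{d-1}, the interaction energy E_β[μ(t)] = (1/(2β)) ∬ e^{β⟨x,x'⟩} dμ(t,x) dμ(t,x') is non-decreasing; specifically (d/dt) E_β[μ(t)] = ∫ ‖∇(G_β * μ(t))(x)‖² dμ(t,x) ≥ 0, where G_β(s) = β^{-1} e^{βs}. -/

import Mathlib

open MeasureTheory
open scoped RealInnerProductSpace

/-- The (USA) mean-field vector field `∇(G_β * μ)(x) = P^⊥_x ∫ e^{β⟨x,y⟩} y dμ(y)`. -/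
noncomputable def USAfield {d : ℕ} (β : ℝ)
    (μ : Measure (EuclideanSpace ℝ (Fin d))) (x : EuclideanSpace ℝ (Fin d)) :
    EuclideanSpace ℝ (Fin d) :=
  let v := ∫ y, Real.exp (β * ⟪x, y⟫) • y ∂μ
  v - ⟪x, v⟫ • x

/-- The interaction energy `E_β[μ] = (1/(2β)) ∬ e^{β⟨x,x'⟩} dμ(x) dμ(x')`. -/
noncomputable def interactionEnergy {d : ℕ} (β : ℝ)
    (μ : Measure (EuclideanSpace ℝ (Fin d))) : ℝ :=
  (1 / (2 * β)) * ∫ x, ∫ y, Real.exp (β * ⟪x, y⟫) ∂μ ∂μ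

variable {d : ℕ}

private noncomputable def Amap (d : ℕ) (n : ℕ) (y : EuclideanSpace ℝ (Fin d)) :
    ContinuousMultilinearMap ℝ (fun _ : Fin n => EuclideanSpace ℝ (Fin d)) ℝ :=
  (ContinuousMultilinearMap.mkPiAlgebra ℝ (Fin n) ℝ).compContinuousLinearMap
    (fun _ => innerSL ℝ y)

private lemma Amap_apply (n : ℕ) (y x : EuclideanSpace ℝ (Fin d)) :
    Amap d n y (fun _ => x) = ⟪y, x⟫ ^ n := by
  simp [Amap, Finset.prod_const]

private lemma Amap_norm (n : ℕ) (y : EuclideanSpace ℝ (Fin d)) :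
    ‖Amap d n y‖ ≤ ‖y‖ ^ n := by
  refine le_trans (ContinuousMultilinearMap.norm_compContinuousLinearMap_le _ _) ?_
  simp [ContinuousMultilinearMap.norm_mkPiAlgebra, innerSL_apply_norm, Finset.prod_const]

private lemma Amap_cont (n : ℕ) : Continuous (Amap d n) := by
  have h : Amap d n = fun y =>
      (ContinuousMultilinearMap.compContinuousLinearMapContinuousMultilinear ℝ
        (fun _ : Fin n => EuclideanSpace ℝ (Fin d)) (fun _ : Fin n => ℝ) ℝ
        (fun _ => innerSL ℝ y)) (ContinuousMultilinearMap.mkPiAlgebra ℝ (Fin n) ℝ) := rfl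
  rw [h]
  exact ((ContinuousLinearMap.apply ℝ _
      (ContinuousMultilinearMap.mkPiAlgebra ℝ (Fin n) ℝ)).continuous).comp
    ((ContinuousMultilinearMap.compContinuousLinearMapContinuousMultilinear ℝ _ _ ℝ).cont.comp
      (continuous_pi fun _ => (innerSL ℝ (E := EuclideanSpace ℝ (Fin d))).continuous))

set_option maxHeartbeats 1000000 in
set_option synthInstance.maxHeartbeats 400000 in
private lemma contDiff_kerInt (β : ℝ) (ν : Measure (EuclideanSpace ℝ (Fin d)))
    [IsFiniteMeasure ν] (hν : ∀ᵐ y ∂ν, ‖y‖ ≤ 1) {n : WithTop ℕ∞} :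
    ContDiff ℝ n (fun x : EuclideanSpace ℝ (Fin d) => ∫ y, Real.exp (β * ⟪x, y⟫) ∂ν) := by
  set C : ℝ := (ν Set.univ).toReal with hC
  have hC0 : 0 ≤ C := ENNReal.toReal_nonneg
  have hAint : ∀ m : ℕ, Integrable (Amap d m) ν := fun m =>
    Integrable.mono' (integrable_const 1) (Amap_cont m).aestronglyMeasurable
      (hν.mono fun y hy =>
        le_trans (Amap_norm m y) (pow_le_one₀ (norm_nonneg y) hy))
  set p : FormalMultilinearSeries ℝ (EuclideanSpace ℝ (Fin d)) ℝ :=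
    fun m => (β ^ m / m.factorial) • ∫ y, Amap d m y ∂ν with hp
  have hpnorm : ∀ m, ‖p m‖ ≤ |β| ^ m / m.factorial * C := by
    intro m
    have h1 : ‖∫ y, Amap d m y ∂ν‖ ≤ 1 * C := by
      refine norm_integral_le_of_norm_le_const ?_
      exact hν.mono fun y hy => le_trans (Amap_norm m y) (pow_le_one₀ (norm_nonneg y) hy)
    have h2 : ‖β ^ m / (m.factorial : ℝ)‖ * ‖∫ y, Amap d m y ∂ν‖
        ≤ |β| ^ m / m.factorial * C := by
      calc ‖β ^ m / (m.factorial : ℝ)‖ * ‖∫ y, Amap d m y ∂ν‖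
          ≤ (|β| ^ m / m.factorial) * (1 * C) := by
            apply mul_le_mul _ h1 (norm_nonneg _) (by positivity)
            rw [Real.norm_eq_abs, abs_div, abs_pow, Nat.abs_cast]
        _ = |β| ^ m / m.factorial * C := by ring
    exact le_trans (norm_smul_le (β ^ m / (m.factorial : ℝ)) (∫ y, Amap d m y ∂ν)) h2
  have hrad : p.radius = ⊤ := by
    refine p.radius_eq_top_of_summable_norm fun r => ?_
    refine Summable.of_nonneg_of_le (fun m => by positivity)
      (fun m => ?_) (((Real.summable_pow_div_factorial (|β| * r)).mul_right C))
    calc ‖p m‖ * (r : ℝ) ^ m ≤ (|β| ^ m / m.factorial * C) * (r : ℝ) ^ m :=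
          mul_le_mul_of_nonneg_right (hpnorm m) (by positivity)
      _ = (|β| * r) ^ m / m.factorial * C := by rw [mul_pow]; ring
  have hball : HasFPowerSeriesOnBall
      (fun x : EuclideanSpace ℝ (Fin d) => ∫ y, Real.exp (β * ⟪x, y⟫) ∂ν) p 0 ⊤ := by
    refine ⟨le_of_eq hrad.symm, ENNReal.zero_lt_top, ?_⟩
    intro z _
    have happ : ∀ m : ℕ, (p m) (fun _ => z) = ∫ y, β ^ m / m.factorial * ⟪y, z⟫ ^ m ∂ν := by
      intro m
      show ((β ^ m / (m.factorial : ℝ)) • ∫ y, Amap d m y ∂ν) (fun _ => z) = _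
      have h2 : (∫ y, Amap d m y ∂ν) (fun _ => z) = ∫ y, ⟪y, z⟫ ^ m ∂ν := by
        have h3 := ContinuousLinearMap.integral_comp_comm
          (ContinuousMultilinearMap.apply ℝ (fun _ : Fin m => EuclideanSpace ℝ (Fin d)) ℝ
            (fun _ => z)) (hAint m)
        simp only [ContinuousMultilinearMap.apply_apply, Amap_apply] at h3
        rw [← h3]
      rw [ContinuousMultilinearMap.smul_apply, h2, smul_eq_mul, ← integral_const_mul]
    have hFint : ∀ m : ℕ, Integrable
        (fun y : EuclideanSpace ℝ (Fin d) => β ^ m / m.factorial * ⟪y, z⟫ ^ m) ν := by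
      intro m
      refine Integrable.mono' (integrable_const (|β| ^ m / m.factorial * ‖z‖ ^ m))
        ((continuous_const.mul ((continuous_id.inner
          (continuous_const : Continuous fun _ => z)).pow m)).aestronglyMeasurable)
        (hν.mono fun y hy => ?_)
      have hyz : |⟪y, z⟫| ≤ ‖z‖ := by
        calc |⟪y, z⟫| ≤ ‖y‖ * ‖z‖ := abs_real_inner_le_norm y z
          _ ≤ 1 * ‖z‖ := mul_le_mul_of_nonneg_right hy (norm_nonneg _)
          _ = ‖z‖ := one_mul _
      rw [Real.norm_eq_abs, abs_mul, abs_div, abs_pow, Nat.abs_cast, abs_pow]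
      exact mul_le_mul_of_nonneg_left (pow_le_pow_left₀ (abs_nonneg _) hyz m) (by positivity)
    have hnormsum : Summable fun m : ℕ =>
        ∫ y, ‖β ^ m / m.factorial * ⟪y, z⟫ ^ m‖ ∂ν := by
      refine Summable.of_nonneg_of_le (fun m => integral_nonneg fun y => norm_nonneg _)
        (fun m => ?_) ((Real.summable_pow_div_factorial (|β| * ‖z‖)).mul_right C)
      have hpt : ∀ᵐ y ∂ν, ‖‖β ^ m / m.factorial * ⟪y, z⟫ ^ m‖‖
          ≤ (|β| * ‖z‖) ^ m / m.factorial := by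
        refine hν.mono fun y hy => ?_
        have hyz : |⟪y, z⟫| ≤ ‖z‖ := by
          calc |⟪y, z⟫| ≤ ‖y‖ * ‖z‖ := abs_real_inner_le_norm y z
            _ ≤ 1 * ‖z‖ := mul_le_mul_of_nonneg_right hy (norm_nonneg _)
            _ = ‖z‖ := one_mul _
        calc ‖‖β ^ m / m.factorial * ⟪y, z⟫ ^ m‖‖
            = |β| ^ m / m.factorial * |⟪y, z⟫| ^ m := by
              rw [norm_norm, Real.norm_eq_abs, abs_mul, abs_div, abs_pow, Nat.abs_cast, abs_pow]
          _ ≤ |β| ^ m / m.factorial * ‖z‖ ^ m :=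
              mul_le_mul_of_nonneg_left (pow_le_pow_left₀ (abs_nonneg _) hyz m) (by positivity)
          _ = (|β| * ‖z‖) ^ m / m.factorial := by rw [mul_pow]; ring
      have h4 := norm_integral_le_of_norm_le_const (μ := ν) hpt
      calc ∫ y, ‖β ^ m / m.factorial * ⟪y, z⟫ ^ m‖ ∂ν
          ≤ ‖∫ y, ‖β ^ m / m.factorial * ⟪y, z⟫ ^ m‖ ∂ν‖ := le_abs_self _
        _ ≤ (|β| * ‖z‖) ^ m / m.factorial * C := h4
    have hs := hasSum_integral_of_summable_integral_norm hFint hnormsum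
    have hexp : ∀ y : EuclideanSpace ℝ (Fin d),
        (∑' m : ℕ, β ^ m / m.factorial * ⟪y, z⟫ ^ m) = Real.exp (β * ⟪z, y⟫) := by
      intro y
      calc (∑' m : ℕ, β ^ m / m.factorial * ⟪y, z⟫ ^ m)
          = ∑' m : ℕ, (β * ⟪y, z⟫) ^ m / m.factorial := by
            congr 1; funext m; rw [mul_pow]; ring
        _ = NormedSpace.exp (β * ⟪y, z⟫) :=
            (NormedSpace.expSeries_div_hasSum_exp (β * ⟪y, z⟫)).tsum_eq
        _ = Real.exp (β * ⟪z, y⟫) := by rw [Real.exp_eq_exp_ℝ, real_inner_comm z y]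
    simp only [hexp] at hs
    simp only [happ, zero_add]
    exact hs
  exact AnalyticOnNhd.contDiff fun x _ =>
    hball.analyticAt_of_mem (by simp [EMetric.mem_ball])

set_option maxHeartbeats 1000000 in
set_option synthInstance.maxHeartbeats 400000 in
private lemma hasFDerivAt_kerInt (β : ℝ) (ν : Measure (EuclideanSpace ℝ (Fin d)))
    [IsFiniteMeasure ν] (hν : ∀ᵐ y ∂ν, ‖y‖ ≤ 1) (x₀ : EuclideanSpace ℝ (Fin d)) :
    HasFDerivAt (fun x : EuclideanSpace ℝ (Fin d) => ∫ y, Real.exp (β * ⟪x, y⟫) ∂ν)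
      (innerSL ℝ (β • ∫ y, Real.exp (β * ⟪x₀, y⟫) • y ∂ν)) x₀ := by
  set F' : EuclideanSpace ℝ (Fin d) → EuclideanSpace ℝ (Fin d) → (EuclideanSpace ℝ (Fin d) →L[ℝ] ℝ) :=
    fun x y => (Real.exp (β * ⟪x, y⟫) * β) • innerSL ℝ y with hF'
  have h_diff : ∀ (y x : EuclideanSpace ℝ (Fin d)), HasFDerivAt (fun x => Real.exp (β * ⟪x, y⟫)) (F' x y) x := by
    intro y x
    have h0 : HasFDerivAt (fun x : EuclideanSpace ℝ (Fin d) => β * ⟪x, y⟫) (β • innerSL ℝ y) x := by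
      have h1 := ((innerSL ℝ y).hasFDerivAt (x := x)).const_mul β
      have h2 : (fun x : EuclideanSpace ℝ (Fin d) => β * (innerSL ℝ y) x) = fun x : EuclideanSpace ℝ (Fin d) => β * ⟪x, y⟫ := by
        funext u; rw [innerSL_apply_apply, real_inner_comm]
      rwa [h2] at h1
    have h3 := h0.exp
    rw [hF']
    have h4 : Real.exp (β * ⟪x, y⟫) • (β • innerSL ℝ y)
        = (Real.exp (β * ⟪x, y⟫) * β) • innerSL ℝ y := smul_smul _ _ _
    rwa [h4] at h3
  have hcont : ∀ x : EuclideanSpace ℝ (Fin d), Continuous (fun y : EuclideanSpace ℝ (Fin d) => Real.exp (β * ⟪x, y⟫)) := fun x =>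
    Real.continuous_exp.comp (continuous_const.mul (continuous_const.inner continuous_id))
  set b : ℝ := |β| * Real.exp (|β| * (‖x₀‖ + 1)) with hb
  have hbound : ∀ᵐ y ∂ν, ∀ x ∈ Metric.ball x₀ 1, ‖F' x y‖ ≤ b := by
    refine hν.mono fun y hy x hx => ?_
    have h5 : ‖x‖ ≤ ‖x₀‖ + 1 := by
      have h6 : ‖x - x₀‖ < 1 := mem_ball_iff_norm.mp hx
      have h7 : ‖x‖ - ‖x₀‖ ≤ ‖x - x₀‖ := norm_sub_norm_le x x₀
      linarith
    have h8 : β * ⟪x, y⟫ ≤ |β| * (‖x₀‖ + 1) := by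
      calc β * ⟪x, y⟫ ≤ |β * ⟪x, y⟫| := le_abs_self _
        _ = |β| * |⟪x, y⟫| := abs_mul _ _
        _ ≤ |β| * (‖x‖ * ‖y‖) := by
            exact mul_le_mul_of_nonneg_left (abs_real_inner_le_norm x y) (abs_nonneg β)
        _ ≤ |β| * (‖x₀‖ + 1) := by
            apply mul_le_mul_of_nonneg_left _ (abs_nonneg β)
            calc ‖x‖ * ‖y‖ ≤ ‖x‖ * 1 := mul_le_mul_of_nonneg_left hy (norm_nonneg x)
              _ = ‖x‖ := mul_one _
              _ ≤ ‖x₀‖ + 1 := h5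
    rw [hF']
    calc ‖(Real.exp (β * ⟪x, y⟫) * β) • innerSL ℝ y‖
        = |Real.exp (β * ⟪x, y⟫) * β| * ‖innerSL ℝ y‖ := by
          rw [norm_smul (Real.exp (β * ⟪x, y⟫) * β) (innerSL ℝ y), Real.norm_eq_abs]
      _ = Real.exp (β * ⟪x, y⟫) * |β| * ‖y‖ := by
          rw [abs_mul, abs_of_pos (Real.exp_pos _), innerSL_apply_norm]
      _ ≤ Real.exp (|β| * (‖x₀‖ + 1)) * |β| * 1 := by
          apply mul_le_mul _ hy (norm_nonneg y) (by positivity)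
          exact mul_le_mul_of_nonneg_right (Real.exp_le_exp.mpr h8) (abs_nonneg β)
      _ = b := by rw [hb]; ring
  have key := hasFDerivAt_integral_of_dominated_of_fderiv_le (𝕜 := ℝ)
    (F := fun x y => Real.exp (β * ⟪x, y⟫)) (F' := fun x y => F' x y) (bound := fun _ => b)
    (Metric.ball_mem_nhds x₀ zero_lt_one)
    (Filter.Eventually.of_forall fun x => (hcont x).aestronglyMeasurable)
    ?_ ?_ hbound (integrable_const b)
    (hν.mono fun y _ x _ => h_diff y x)
  · -- identify the derivative
    have hF'int : Integrable (fun y => F' x₀ y) ν := by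
      refine Integrable.mono' (integrable_const b) ?_ ?_
      · apply Continuous.aestronglyMeasurable
        exact (((hcont x₀).mul continuous_const).smul (innerSL ℝ (E := EuclideanSpace ℝ (Fin d))).continuous)
      · exact hbound.mono fun y hy => hy x₀ (Metric.mem_ball_self zero_lt_one)
    have hvint : Integrable (fun y : EuclideanSpace ℝ (Fin d) => Real.exp (β * ⟪x₀, y⟫) • y) ν := by
      refine Integrable.mono' (integrable_const (Real.exp (|β| * (‖x₀‖ + 1)))) ?_ ?_
      · exact ((hcont x₀).smul continuous_id).aestronglyMeasurable
      · refine hν.mono fun y hy => ?_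
        rw [norm_smul, Real.norm_eq_abs, abs_of_pos (Real.exp_pos _)]
        have h8 : β * ⟪x₀, y⟫ ≤ |β| * (‖x₀‖ + 1) := by
          calc β * ⟪x₀, y⟫ ≤ |β * ⟪x₀, y⟫| := le_abs_self _
            _ = |β| * |⟪x₀, y⟫| := abs_mul _ _
            _ ≤ |β| * (‖x₀‖ * ‖y‖) :=
                mul_le_mul_of_nonneg_left (abs_real_inner_le_norm x₀ y) (abs_nonneg β)
            _ ≤ |β| * (‖x₀‖ + 1) := by
                apply mul_le_mul_of_nonneg_left _ (abs_nonneg β)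
                have := mul_le_mul_of_nonneg_left hy (norm_nonneg x₀)
                simp only [mul_one] at this
                linarith [norm_nonneg x₀]
        calc Real.exp (β * ⟪x₀, y⟫) * ‖y‖ ≤ Real.exp (|β| * (‖x₀‖ + 1)) * 1 := by
              apply mul_le_mul (Real.exp_le_exp.mpr h8) hy (norm_nonneg y) (by positivity)
          _ = Real.exp (|β| * (‖x₀‖ + 1)) := mul_one _
    have heq : (∫ y, F' x₀ y ∂ν) = innerSL ℝ (β • ∫ y, Real.exp (β * ⟪x₀, y⟫) • y ∂ν) := by
      apply ContinuousLinearMap.ext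
      intro h
      rw [ContinuousLinearMap.integral_apply hF'int]
      have hrhs : (innerSL ℝ (β • ∫ y, Real.exp (β * ⟪x₀, y⟫) • y ∂ν)) h
          = β * ∫ y, Real.exp (β * ⟪x₀, y⟫) * ⟪h, y⟫ ∂ν := by
        rw [innerSL_apply_apply, real_inner_smul_left, real_inner_comm]
        congr 1
        rw [← integral_inner hvint h]
        congr 1
        funext y
        rw [real_inner_smul_right]
      rw [hrhs, ← integral_const_mul]
      refine integral_congr_ae (Filter.Eventually.of_forall fun y => ?_)
      rw [hF']
      simp only [ContinuousLinearMap.smul_apply, innerSL_apply_apply, smul_eq_mul]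
      rw [real_inner_comm y h]
      ring
    rwa [heq] at key
  · -- Integrable (F x₀)
    refine Integrable.mono' (integrable_const (Real.exp (|β| * (‖x₀‖ + 1)))) 
      (hcont x₀).aestronglyMeasurable (hν.mono fun y hy => ?_)
    rw [Real.norm_eq_abs, abs_of_pos (Real.exp_pos _)]
    apply Real.exp_le_exp.mpr
    calc β * ⟪x₀, y⟫ ≤ |β * ⟪x₀, y⟫| := le_abs_self _
      _ = |β| * |⟪x₀, y⟫| := abs_mul _ _
      _ ≤ |β| * (‖x₀‖ * ‖y‖) :=
          mul_le_mul_of_nonneg_left (abs_real_inner_le_norm x₀ y) (abs_nonneg β)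
      _ ≤ |β| * (‖x₀‖ + 1) := by
          apply mul_le_mul_of_nonneg_left _ (abs_nonneg β)
          have := mul_le_mul_of_nonneg_left hy (norm_nonneg x₀)
          simp only [mul_one] at this
          linarith [norm_nonneg x₀]
  · -- AEStronglyMeasurable (F' x₀)
    apply Continuous.aestronglyMeasurable
    exact (((hcont x₀).mul continuous_const).smul (innerSL ℝ (E := EuclideanSpace ℝ (Fin d))).continuous)


set_option maxHeartbeats 2000000 in
set_option synthInstance.maxHeartbeats 400000 in
/-- Along weak solutions of the (USA) continuity equation on the sphere, the
interaction energy satisfies `(d/dt) E_β[μ(t)] = ∫ ‖∇(G_β * μ(t))‖² dμ(t) ≥ 0`;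
in particular it is non-decreasing. -/
theorem stmt_17 {d : ℕ} (hd : 2 ≤ d) (β : ℝ) (hβ : 0 < β)
    (μ : ℝ → Measure (EuclideanSpace ℝ (Fin d)))
    (hprob : ∀ t, IsProbabilityMeasure (μ t))
    (hsupp : ∀ t, μ t (Metric.sphere (0 : EuclideanSpace ℝ (Fin d)) 1)ᶜ = 0)
    (hweak : ∀ φ : EuclideanSpace ℝ (Fin d) → ℝ, ContDiff ℝ (⊤ : ℕ∞) φ → ∀ t : ℝ,
      HasDerivAt (fun s => ∫ x, φ x ∂(μ s))
        (∫ x, ⟪gradient φ x, USAfield β (μ t) x⟫ ∂(μ t)) t) :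
    ∀ t : ℝ,
      HasDerivAt (fun s => interactionEnergy β (μ s))
        (∫ x, ‖USAfield β (μ t) x‖ ^ 2 ∂(μ t)) t ∧
      0 ≤ ∫ x, ‖USAfield β (μ t) x‖ ^ 2 ∂(μ t) := by
  intro t
  haveI : ∀ s : ℝ, IsFiniteMeasure (μ s) := fun s => by
    haveI := hprob s; infer_instance
  set Sp : Set (EuclideanSpace ℝ (Fin d)) := Metric.sphere 0 1 with hSp
  have hae : ∀ s : ℝ, ∀ᵐ x ∂μ s, x ∈ Sp := by
    intro s
    rw [MeasureTheory.ae_iff]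
    simpa [hSp, Set.compl_def] using hsupp s
  have hnorm1 : ∀ x ∈ Sp, ‖x‖ = 1 := fun x hx => by
    simpa [hSp, mem_sphere_zero_iff_norm] using hx
  have haen : ∀ s : ℝ, ∀ᵐ x ∂μ s, ‖x‖ ≤ 1 :=
    fun s => (hae s).mono fun x hx => le_of_eq (hnorm1 x hx)
  -- the inner product is at most 1 on the sphere
  have hip1 : ∀ x ∈ Sp, ∀ y : EuclideanSpace ℝ (Fin d), ‖y‖ ≤ 1 → β * ⟪x, y⟫ ≤ β := by
    intro x hx y hy
    have h1 : ⟪x, y⟫ ≤ 1 := by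
      calc ⟪x, y⟫ ≤ |⟪x, y⟫| := le_abs_self _
        _ ≤ ‖x‖ * ‖y‖ := abs_real_inner_le_norm x y
        _ ≤ 1 := by rw [hnorm1 x hx, one_mul]; exact hy
    nlinarith [hβ.le]
  set M : ℝ := 2 * Real.exp β with hM
  have hM0 : 0 < M := by positivity
  -- bound on the velocity field on the sphere
  have hvfb : ∀ s : ℝ, ∀ x ∈ Sp, ‖∫ y, Real.exp (β * ⟪x, y⟫) • y ∂μ s‖ ≤ Real.exp β := by
    intro s x hx
    haveI := hprob s
    have h1 : ∀ᵐ y ∂μ s, ‖Real.exp (β * ⟪x, y⟫) • y‖ ≤ Real.exp β := by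
      refine (haen s).mono fun y hy => ?_
      rw [norm_smul, Real.norm_eq_abs, abs_of_pos (Real.exp_pos _)]
      calc Real.exp (β * ⟪x, y⟫) * ‖y‖ ≤ Real.exp β * 1 :=
            mul_le_mul (Real.exp_le_exp.mpr (hip1 x hx y hy)) hy (norm_nonneg _)
              (Real.exp_pos _).le
        _ = Real.exp β := mul_one _
    simpa using norm_integral_le_of_norm_le_const h1
  have husa : ∀ s : ℝ, ∀ x ∈ Sp, ‖USAfield β (μ s) x‖ ≤ M := by
    intro s x hx
    have hx1 : ‖x‖ = 1 := hnorm1 x hx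
    set v := ∫ y, Real.exp (β * ⟪x, y⟫) • y ∂μ s with hv
    have h2 : USAfield β (μ s) x = v - ⟪x, v⟫ • x := rfl
    rw [h2, hM]
    calc ‖v - ⟪x, v⟫ • x‖ ≤ ‖v‖ + ‖⟪x, v⟫ • x‖ := norm_sub_le _ _
      _ = ‖v‖ + |⟪x, v⟫| * ‖x‖ := by rw [norm_smul, Real.norm_eq_abs]
      _ ≤ ‖v‖ + (‖x‖ * ‖v‖) * ‖x‖ := by
          have := abs_real_inner_le_norm x v
          nlinarith [norm_nonneg x]
      _ = 2 * ‖v‖ := by rw [hx1]; ring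
      _ ≤ 2 * Real.exp β := by linarith [hvfb s x hx]
  -- gradient vs fderiv
  have hdual : ∀ w : EuclideanSpace ℝ (Fin d),
      (InnerProductSpace.toDual ℝ (EuclideanSpace ℝ (Fin d))).symm (innerSL ℝ w) = w := by
    intro w
    refine ext_inner_right ℝ fun v => ?_
    rw [InnerProductSpace.toDual_symm_apply, innerSL_apply_apply]
  have hgradinner : ∀ (ψ : EuclideanSpace ℝ (Fin d) → ℝ) (x u : EuclideanSpace ℝ (Fin d)),
      ⟪gradient ψ x, u⟫ = fderiv ℝ ψ x u := by
    intro ψ x u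
    exact InnerProductSpace.toDual_symm_apply
  -- Lemma A : a priori Lipschitz estimate from the weak formulation
  have lemA : ∀ ψ : EuclideanSpace ℝ (Fin d) → ℝ, ContDiff ℝ (⊤ : ℕ∞) ψ → ∀ L : ℝ,
      (∀ x ∈ Sp, ‖fderiv ℝ ψ x‖ ≤ L) →
      ∀ s u : ℝ, |(∫ x, ψ x ∂μ s) - ∫ x, ψ x ∂μ u| ≤ L * M * |s - u| := by
    intro ψ hψ L hL s u
    have hD : ∀ r : ℝ, |∫ x, ⟪gradient ψ x, USAfield β (μ r) x⟫ ∂μ r| ≤ L * M := by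
      intro r
      haveI := hprob r
      have h1 : ∀ᵐ x ∂μ r, ‖⟪gradient ψ x, USAfield β (μ r) x⟫‖ ≤ L * M := by
        refine (hae r).mono fun x hx => ?_
        rw [Real.norm_eq_abs, hgradinner]
        calc |fderiv ℝ ψ x (USAfield β (μ r) x)|
            ≤ ‖fderiv ℝ ψ x‖ * ‖USAfield β (μ r) x‖ := (fderiv ℝ ψ x).le_opNorm _
          _ ≤ L * M := mul_le_mul (hL x hx) (husa r x hx) (norm_nonneg _)
              (le_trans (norm_nonneg _) (hL x hx))
      simpa [Real.norm_eq_abs] using norm_integral_le_of_norm_le_const h1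
    have hmvt := Convex.norm_image_sub_le_of_norm_hasDerivWithin_le
      (f := fun r => ∫ x, ψ x ∂μ r)
      (f' := fun r => ∫ x, ⟪gradient ψ x, USAfield β (μ r) x⟫ ∂μ r)
      (s := Set.univ) (C := L * M)
      (fun r _ => (hweak ψ hψ r).hasDerivWithinAt)
      (fun r _ => by simpa [Real.norm_eq_abs] using hD r)
      convex_univ (Set.mem_univ u) (Set.mem_univ s)
    simpa [Real.norm_eq_abs] using hmvt
  -- integrability of the vector kernel
  have hvint : ∀ (s : ℝ) (x : EuclideanSpace ℝ (Fin d)),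
      Integrable (fun y => Real.exp (β * ⟪x, y⟫) • y) (μ s) := by
    intro s x
    refine Integrable.mono' (integrable_const (Real.exp (|β| * ‖x‖)))
      ((Real.continuous_exp.comp (continuous_const.mul
        (continuous_const.inner continuous_id))).smul continuous_id).aestronglyMeasurable
      ((haen s).mono fun y hy => ?_)
    rw [norm_smul, Real.norm_eq_abs, abs_of_pos (Real.exp_pos _)]
    have h8 : β * ⟪x, y⟫ ≤ |β| * ‖x‖ := by
      calc β * ⟪x, y⟫ ≤ |β * ⟪x, y⟫| := le_abs_self _
        _ = |β| * |⟪x, y⟫| := abs_mul _ _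
        _ ≤ |β| * (‖x‖ * ‖y‖) :=
            mul_le_mul_of_nonneg_left (abs_real_inner_le_norm x y) (abs_nonneg β)
        _ ≤ |β| * (‖x‖ * 1) := by
            apply mul_le_mul_of_nonneg_left _ (abs_nonneg β)
            exact mul_le_mul_of_nonneg_left hy (norm_nonneg x)
        _ = |β| * ‖x‖ := by rw [mul_one]
    calc Real.exp (β * ⟪x, y⟫) * ‖y‖ ≤ Real.exp (|β| * ‖x‖) * 1 :=
          mul_le_mul (Real.exp_le_exp.mpr h8) hy (norm_nonneg _) (Real.exp_pos _).le
      _ = Real.exp (|β| * ‖x‖) := mul_one _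
  -- quantitative bound on the difference of velocity fields
  set Kc : ℝ := Real.exp β * (β + 1) * M with hKc
  have hKc0 : 0 < Kc := by positivity
  have hdv : ∀ s u : ℝ, ∀ x ∈ Sp,
      ‖(∫ y, Real.exp (β * ⟪x, y⟫) • y ∂μ s) - ∫ y, Real.exp (β * ⟪x, y⟫) • y ∂μ u‖
        ≤ Kc * |s - u| := by
    intro s u x hx
    set w : EuclideanSpace ℝ (Fin d) :=
      (∫ y, Real.exp (β * ⟪x, y⟫) • y ∂μ s) - ∫ y, Real.exp (β * ⟪x, y⟫) • y ∂μ u with hw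
    set ψ : EuclideanSpace ℝ (Fin d) → ℝ := fun y => Real.exp (β * ⟪x, y⟫) * ⟪y, w⟫ with hψdef
    have hψ : ContDiff ℝ (⊤ : ℕ∞) ψ :=
      (Real.contDiff_exp.comp (contDiff_const.mul
        (ContDiff.inner ℝ contDiff_const contDiff_id))).mul
        (ContDiff.inner ℝ contDiff_id contDiff_const)
    have hLψ : ∀ z ∈ Sp, ‖fderiv ℝ ψ z‖ ≤ Real.exp β * (β + 1) * ‖w‖ := by
      intro z hz
      have hf1 : HasFDerivAt (fun y : EuclideanSpace ℝ (Fin d) => Real.exp (β * ⟪x, y⟫))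
          ((Real.exp (β * ⟪x, z⟫) * β) • innerSL ℝ x) z := by
        have h0 : HasFDerivAt (fun y : EuclideanSpace ℝ (Fin d) => β * ⟪x, y⟫)
            (β • innerSL ℝ x) z := by
          have h1 := ((innerSL ℝ x).hasFDerivAt (x := z)).const_mul β
          have h2 : (fun y : EuclideanSpace ℝ (Fin d) => β * (innerSL ℝ x) y)
              = fun y => β * ⟪x, y⟫ := by
            funext v; rw [innerSL_apply_apply]
          rwa [h2] at h1
        have h3 := h0.exp
        rwa [smul_smul] at h3
      have hf2 : HasFDerivAt (fun y : EuclideanSpace ℝ (Fin d) => ⟪y, w⟫) (innerSL ℝ w) z := by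
        have h1 := (innerSL ℝ w).hasFDerivAt (x := z)
        have h2 : ⇑(innerSL ℝ w) = fun y : EuclideanSpace ℝ (Fin d) => ⟪y, w⟫ := by
          funext v; rw [innerSL_apply_apply, real_inner_comm]
        rwa [h2] at h1
      have hfm := hf1.mul hf2
      rw [show fderiv ℝ ψ z = _ from hfm.fderiv]
      have hz1 : ‖z‖ = 1 := hnorm1 z hz
      have he : Real.exp (β * ⟪x, z⟫) ≤ Real.exp β :=
        Real.exp_le_exp.mpr (hip1 x hx z (le_of_eq hz1))
      have hzw : |⟪z, w⟫| ≤ ‖w‖ := by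
        calc |⟪z, w⟫| ≤ ‖z‖ * ‖w‖ := abs_real_inner_le_norm z w
          _ = ‖w‖ := by rw [hz1, one_mul]
      calc ‖Real.exp (β * ⟪x, z⟫) • innerSL ℝ w
            + ⟪z, w⟫ • ((Real.exp (β * ⟪x, z⟫) * β) • innerSL ℝ x)‖
          ≤ ‖Real.exp (β * ⟪x, z⟫) • innerSL ℝ w‖
            + ‖⟪z, w⟫ • ((Real.exp (β * ⟪x, z⟫) * β) • innerSL ℝ x)‖ := norm_add_le _ _
        _ = Real.exp (β * ⟪x, z⟫) * ‖w‖ + |⟪z, w⟫| * (Real.exp (β * ⟪x, z⟫) * β * ‖x‖) := by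
            rw [norm_smul (Real.exp (β * ⟪x, z⟫)) (innerSL ℝ w),
              norm_smul (⟪z, w⟫ : ℝ) ((Real.exp (β * ⟪x, z⟫) * β) • innerSL ℝ x),
              norm_smul (Real.exp (β * ⟪x, z⟫) * β) (innerSL ℝ x),
              innerSL_apply_norm, innerSL_apply_norm, Real.norm_eq_abs, Real.norm_eq_abs,
              abs_of_pos (Real.exp_pos _), Real.norm_eq_abs,
              abs_of_pos (mul_pos (Real.exp_pos _) hβ)]
        _ ≤ Real.exp β * ‖w‖ + ‖w‖ * (Real.exp β * β * 1) := by
            have hx1 : ‖x‖ = 1 := hnorm1 x hx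
            rw [hx1]
            have h9 : |⟪z, w⟫| * (Real.exp (β * ⟪x, z⟫) * β * 1)
                ≤ ‖w‖ * (Real.exp β * β * 1) := by
              apply mul_le_mul hzw _ (by positivity) (norm_nonneg w)
              have := mul_le_mul_of_nonneg_right he hβ.le
              nlinarith
            have h10 : Real.exp (β * ⟪x, z⟫) * ‖w‖ ≤ Real.exp β * ‖w‖ :=
              mul_le_mul_of_nonneg_right he (norm_nonneg w)
            linarith
        _ = Real.exp β * (β + 1) * ‖w‖ := by ring
    have hinner_eq : ∀ a : ℝ, ⟪∫ y, Real.exp (β * ⟪x, y⟫) • y ∂μ a, w⟫ = ∫ y, ψ y ∂μ a := by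
      intro a
      rw [real_inner_comm, ← integral_inner (hvint a x) w]
      refine integral_congr_ae (Filter.Eventually.of_forall fun y => ?_)
      rw [hψdef]
      simp only [real_inner_smul_right]
      rw [real_inner_comm w y]
    have hkey : |⟪w, w⟫| ≤ Real.exp β * (β + 1) * ‖w‖ * M * |s - u| := by
      have h1 : ⟪w, w⟫ = (∫ y, ψ y ∂μ s) - ∫ y, ψ y ∂μ u := by
        rw [hw, inner_sub_left, hinner_eq s, hinner_eq u]
      rw [h1]
      exact lemA ψ hψ _ hLψ s u
    have hsq : ‖w‖ ^ 2 ≤ Real.exp β * (β + 1) * ‖w‖ * M * |s - u| := by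
      rw [← real_inner_self_eq_norm_sq]
      exact le_trans (le_abs_self _) hkey
    rcases eq_or_lt_of_le (norm_nonneg w) with h0 | h0
    · rw [← h0]; positivity
    · have h2 : ‖w‖ * ‖w‖ ≤ (Kc * |s - u|) * ‖w‖ := by
        have : ‖w‖ ^ 2 = ‖w‖ * ‖w‖ := sq ‖w‖
        rw [← this]
        calc ‖w‖ ^ 2 ≤ Real.exp β * (β + 1) * ‖w‖ * M * |s - u| := hsq
          _ = (Kc * |s - u|) * ‖w‖ := by rw [hKc]; ring
      exact le_of_mul_le_mul_right h2 h0
  -- derivative of the frozen energy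
  haveI := hprob t
  have hφt : ContDiff ℝ (⊤ : ℕ∞) (fun x => ∫ y, Real.exp (β * ⟪x, y⟫) ∂μ t) :=
    contDiff_kerInt β (μ t) (haen t)
  set I : ℝ := ∫ x, ‖USAfield β (μ t) x‖ ^ 2 ∂μ t with hI
  have hBt := hweak _ hφt t
  have hval : (∫ x, ⟪gradient (fun x => ∫ y, Real.exp (β * ⟪x, y⟫) ∂μ t) x,
      USAfield β (μ t) x⟫ ∂μ t) = β * I := by
    rw [hI, ← integral_const_mul]
    refine integral_congr_ae ((hae t).mono fun x hx => ?_)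
    show ⟪gradient (fun x => ∫ y, Real.exp (β * ⟪x, y⟫) ∂μ t) x, USAfield β (μ t) x⟫
      = β * ‖USAfield β (μ t) x‖ ^ 2
    have hx1 : ‖x‖ = 1 := hnorm1 x hx
    have hgrad : gradient (fun x => ∫ y, Real.exp (β * ⟪x, y⟫) ∂μ t) x
        = β • ∫ y, Real.exp (β * ⟪x, y⟫) • y ∂μ t := by
      have hf := hasFDerivAt_kerInt β (μ t) (haen t) x
      have hg := hf.hasGradientAt
      rw [hdual] at hg
      exact hg.gradient
    rw [hgrad]
    set v := ∫ y, Real.exp (β * ⟪x, y⟫) • y ∂μ t with hv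
    have husa_eq : USAfield β (μ t) x = v - ⟪x, v⟫ • x := rfl
    rw [husa_eq]
    have h1 : ⟪β • v, v - ⟪x, v⟫ • x⟫ = β * (⟪v, v⟫ - ⟪x, v⟫ * ⟪v, x⟫) := by
      rw [real_inner_smul_left, inner_sub_right, real_inner_smul_right]
    have h2 : ‖v - ⟪x, v⟫ • x‖ ^ 2 = ⟪v, v⟫ - 2 * ⟪x, v⟫ * ⟪v, x⟫ + ⟪x, v⟫ ^ 2 := by
      rw [norm_sub_sq_real, real_inner_smul_right, norm_smul, Real.norm_eq_abs, hx1, mul_one,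
        sq_abs, real_inner_self_eq_norm_sq]
      ring
    rw [h1, h2]
    have h3 : ⟪v, x⟫ = ⟪x, v⟫ := real_inner_comm x v
    rw [h3]
    ring
  rw [hval] at hBt
  -- main quantities
  set Nf : ℝ → ℝ := fun s => ∫ x, ∫ y, Real.exp (β * ⟪x, y⟫) ∂μ s ∂μ s with hNf
  set Bf : ℝ → ℝ := fun s => ∫ x, ∫ y, Real.exp (β * ⟪x, y⟫) ∂μ t ∂μ s with hBf
  set Rf : ℝ → ℝ := fun s =>
    (∫ x, ((∫ y, Real.exp (β * ⟪x, y⟫) ∂μ s) - ∫ y, Real.exp (β * ⟪x, y⟫) ∂μ t) ∂μ s)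
      - ∫ x, ((∫ y, Real.exp (β * ⟪x, y⟫) ∂μ s) - ∫ y, Real.exp (β * ⟪x, y⟫) ∂μ t) ∂μ t
    with hRf
  have hkerb : ∀ (a : ℝ) (x : EuclideanSpace ℝ (Fin d)), x ∈ Sp →
      ‖∫ y, Real.exp (β * ⟪x, y⟫) ∂μ a‖ ≤ Real.exp β := by
    intro a x hx
    haveI := hprob a
    have h1 : ∀ᵐ y ∂μ a, ‖Real.exp (β * ⟪x, y⟫)‖ ≤ Real.exp β := by
      refine (haen a).mono fun y hy => ?_
      rw [Real.norm_eq_abs, abs_of_pos (Real.exp_pos _)]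
      exact Real.exp_le_exp.mpr (hip1 x hx y hy)
    simpa using norm_integral_le_of_norm_le_const h1
  have hker_int : ∀ a c : ℝ, Integrable (fun x => ∫ y, Real.exp (β * ⟪x, y⟫) ∂μ a) (μ c) := by
    intro a c
    refine Integrable.mono' (integrable_const (Real.exp β))
      ((contDiff_kerInt (n := 1) β (μ a) (haen a)).continuous).aestronglyMeasurable
      ((hae c).mono fun x hx => hkerb a x hx)
  -- Fubini
  have hfub : ∀ s : ℝ, (∫ x, ∫ y, Real.exp (β * ⟪x, y⟫) ∂μ s ∂μ t) = Bf s := by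
    intro s
    haveI := hprob s
    have hprodae : ∀ᵐ p : (EuclideanSpace ℝ (Fin d)) × (EuclideanSpace ℝ (Fin d))
        ∂((μ t).prod (μ s)), p.1 ∈ Sp ∧ p.2 ∈ Sp := by
      rw [MeasureTheory.ae_iff]
      have hsub : {p : (EuclideanSpace ℝ (Fin d)) × (EuclideanSpace ℝ (Fin d)) |
          ¬(p.1 ∈ Sp ∧ p.2 ∈ Sp)} ⊆ (Spᶜ ×ˢ Set.univ) ∪ (Set.univ ×ˢ Spᶜ) := by
        intro p hp
        simp only [Set.mem_setOf_eq, not_and_or] at hp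
        rcases hp with hp | hp
        · exact Or.inl (by simp [hp])
        · exact Or.inr (by simp [hp])
      refine measure_mono_null hsub (measure_union_null ?_ ?_)
      · rw [MeasureTheory.Measure.prod_prod, hsupp t, zero_mul]
      · rw [MeasureTheory.Measure.prod_prod, hsupp s, mul_zero]
    have hprod : MeasureTheory.Integrable
        (Function.uncurry fun x y => Real.exp (β * ⟪x, y⟫)) ((μ t).prod (μ s)) := by
      refine Integrable.mono' (integrable_const (Real.exp β))
        (Continuous.aestronglyMeasurable (Real.continuous_exp.comp
          (continuous_const.mul (continuous_fst.inner continuous_snd)))) ?_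
      refine hprodae.mono fun p hp => ?_
      rw [Function.uncurry, Real.norm_eq_abs, abs_of_pos (Real.exp_pos _)]
      exact Real.exp_le_exp.mpr (hip1 p.1 hp.1 p.2 (le_of_eq (hnorm1 p.2 hp.2)))
    have hswap := MeasureTheory.integral_integral_swap hprod
    rw [hswap]
    have hpt : ∀ y : EuclideanSpace ℝ (Fin d),
        (∫ x, Real.exp (β * ⟪x, y⟫) ∂μ t) = ∫ x, Real.exp (β * ⟪y, x⟫) ∂μ t := fun y =>
      integral_congr_ae (Filter.Eventually.of_forall fun u =>
        (by rw [real_inner_comm] : Real.exp (β * ⟪u, y⟫) = Real.exp (β * ⟪y, u⟫)))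
    calc ∫ y, ∫ x, Real.exp (β * ⟪x, y⟫) ∂μ t ∂μ s
        = ∫ y, ∫ x, Real.exp (β * ⟪y, x⟫) ∂μ t ∂μ s :=
          integral_congr_ae (Filter.Eventually.of_forall fun y => hpt y)
      _ = Bf s := rfl
  -- the algebraic identity
  have hids : ∀ s : ℝ, Nf s = 2 * Bf s - Nf t + Rf s := by
    intro s
    haveI := hprob s
    have h1 : (∫ x, ((∫ y, Real.exp (β * ⟪x, y⟫) ∂μ s)
        - ∫ y, Real.exp (β * ⟪x, y⟫) ∂μ t) ∂μ s) = Nf s - Bf s := by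
      rw [integral_sub (hker_int s s) (hker_int t s)]
    have h2 : (∫ x, ((∫ y, Real.exp (β * ⟪x, y⟫) ∂μ s)
        - ∫ y, Real.exp (β * ⟪x, y⟫) ∂μ t) ∂μ t)
        = (∫ x, ∫ y, Real.exp (β * ⟪x, y⟫) ∂μ s ∂μ t) - Nf t := by
      rw [integral_sub (hker_int s t) (hker_int t t)]
    have h3 := hfub s
    rw [hRf]
    simp only []
    rw [h1, h2, h3]
    ring
  -- bound on the remainder
  have hRb : ∀ s : ℝ, |Rf s| ≤ β * Kc * M * (s - t) ^ 2 := by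
    intro s
    set g : EuclideanSpace ℝ (Fin d) → ℝ := fun x =>
      (∫ y, Real.exp (β * ⟪x, y⟫) ∂μ s) - ∫ y, Real.exp (β * ⟪x, y⟫) ∂μ t with hg
    have hgsmooth : ContDiff ℝ (⊤ : ℕ∞) g :=
      (contDiff_kerInt β (μ s) (haen s)).sub (contDiff_kerInt β (μ t) (haen t))
    have hgL : ∀ x ∈ Sp, ‖fderiv ℝ g x‖ ≤ β * Kc * |s - t| := by
      intro x hx
      have hfs := hasFDerivAt_kerInt β (μ s) (haen s) x
      have hft := hasFDerivAt_kerInt β (μ t) (haen t) x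
      have hd1 : fderiv ℝ g x = innerSL ℝ ((β • ∫ y, Real.exp (β * ⟪x, y⟫) • y ∂μ s)
          - β • ∫ y, Real.exp (β * ⟪x, y⟫) • y ∂μ t) := by
        rw [hg, fderiv_fun_sub hfs.differentiableAt hft.differentiableAt, hfs.fderiv, hft.fderiv,
          ← map_sub]
      rw [hd1, innerSL_apply_norm, ← smul_sub, norm_smul, Real.norm_eq_abs, abs_of_pos hβ]
      calc β * ‖(∫ y, Real.exp (β * ⟪x, y⟫) • y ∂μ s)
            - ∫ y, Real.exp (β * ⟪x, y⟫) • y ∂μ t‖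
          ≤ β * (Kc * |s - t|) := mul_le_mul_of_nonneg_left (hdv s t x hx) hβ.le
        _ = β * Kc * |s - t| := by ring
    have h4 := lemA g hgsmooth _ hgL s t
    have h5 : Rf s = (∫ x, g x ∂μ s) - ∫ x, g x ∂μ t := rfl
    rw [h5]
    calc |(∫ x, g x ∂μ s) - ∫ x, g x ∂μ t| ≤ β * Kc * |s - t| * M * |s - t| := h4
      _ = β * Kc * M * (|s - t| * |s - t|) := by ring
      _ = β * Kc * M * (s - t) ^ 2 := by rw [abs_mul_abs_self, ← pow_two]
  -- derivative of the remainder is zero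
  have hR0 : Rf t = 0 := by
    rw [hRf]
    simp
  have hRd : HasDerivAt Rf 0 t := by
    rw [hasDerivAt_iff_isLittleO]
    simp only [hR0, sub_zero, smul_zero]
    have h1 : Rf =O[nhds t] (fun s => (s - t) * (s - t)) := by
      apply Asymptotics.isBigO_of_le' (c := β * Kc * M) (nhds t)
      intro s
      rw [Real.norm_eq_abs, Real.norm_eq_abs]
      calc |Rf s| ≤ β * Kc * M * (s - t) ^ 2 := hRb s
        _ = β * Kc * M * |(s - t) * (s - t)| := by
            rw [abs_mul, abs_mul_abs_self, ← pow_two]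
    have h3 : (fun s : ℝ => (s - t) * (s - t)) =o[nhds t] (fun s => (1 : ℝ) * (s - t)) := by
      apply Asymptotics.IsLittleO.mul_isBigO
      · rw [Asymptotics.isLittleO_one_iff]
        have h4 : Filter.Tendsto (fun s : ℝ => s - t) (nhds t) (nhds (t - t)) :=
          ((continuous_id.sub continuous_const).tendsto t)
        simpa using h4
      · exact Asymptotics.isBigO_refl _ _
    simp only [one_mul] at h3
    exact h1.trans_isLittleO h3
  -- derivative of Nf
  have hNd : HasDerivAt Nf (2 * (β * I)) t := by
    have hBd : HasDerivAt Bf (β * I) t := hBt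
    have h6 : HasDerivAt (fun s => 2 * Bf s - Nf t + Rf s) (2 * (β * I) + 0) t :=
      ((hBd.const_mul 2).sub_const (Nf t)).add hRd
    rw [add_zero] at h6
    exact h6.congr_of_eventuallyEq (Filter.Eventually.of_forall fun s => hids s)
  constructor
  · have h7 := hNd.const_mul (1 / (2 * β))
    have h8 : (1 / (2 * β)) * (2 * (β * I)) = I := by
      have h9 : (2 * β) ≠ 0 := by positivity
      field_simp
    rw [h8] at h7
    exact h7
  · exact integral_nonneg fun x => by positivity
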